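/- arXiv:math/0412163 — 2 statements merged into one kernel-verified Lean document; each statement's English description precedes it below -/
import Mathlib

section
/- Let N ≥ 1 and 0 < ρ < ρ′. Then C_{ρ,N} ⊆ C_{ρ′,N}: every N-tuple A = (A₁,…,A_N) of bounded linear operators on a complex Hilbert space X admitting a unitary ρ-dilation also admits a unitary ρ′-dilation. -/
open ContinuousLinearMap

noncomputable section

/-- A continuous linear operator on a complex Hilbert space is unitary. -/
def IsUnitaryOp {Y : Type*} [NormedAddCommGroup Y] [InnerProductSpace ℂ Y] [CompleteSpace Y]
    (T : Y →L[ℂ] Y) : Prop :=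
  T ∘L adjoint T = 1 ∧ adjoint T ∘L T = 1

/-- A unitary `ρ`-dilation of an `N`-tuple of bounded operators on a complex Hilbert space `X`:
a complex Hilbert space `Y`, a linear isometry `ι : X → Y`, and an `N`-tuple `At` of operators
on `Y` such that every unimodular combination `ζ₁At₁ + ⋯ + ζ_N At_N` is unitary, and
`(z₁A₁ + ⋯ + z_N A_N)ⁿ = ρ · ι* ∘ (z₁At₁ + ⋯ + z_N At_N)ⁿ ∘ ι` for all `z ∈ ℂ^N` and `n ≥ 1`. -/
structure UnitaryRhoDilation (N : ℕ) (ρ : ℝ) (X : Type*) [NormedAddCommGroup X]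
    [InnerProductSpace ℂ X] [CompleteSpace X] (A : Fin N → X →L[ℂ] X) where
  Y : Type
  [instN : NormedAddCommGroup Y]
  [instI : InnerProductSpace ℂ Y]
  [instC : CompleteSpace Y]
  ι : X →L[ℂ] Y
  isom : Isometry ι
  At : Fin N → Y →L[ℂ] Y
  unit : ∀ ζ : Fin N → ℂ, (∀ k, ‖ζ k‖ = 1) → IsUnitaryOp (∑ k, ζ k • At k)
  dil : ∀ (z : Fin N → ℂ) (n : ℕ), 1 ≤ n →
    (∑ k, z k • A k) ^ n = (ρ : ℂ) • (adjoint ι ∘L (((∑ k, z k • At k) ^ n) ∘L ι))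

/-- The class `C_{ρ,N}`: `N`-tuples of bounded operators admitting a unitary `ρ`-dilation. -/
def MemC (N : ℕ) (ρ : ℝ) {X : Type*} [NormedAddCommGroup X] [InnerProductSpace ℂ X]
    [CompleteSpace X] (A : Fin N → X →L[ℂ] X) : Prop :=
  Nonempty (UnitaryRhoDilation N ρ X A)

/-!
Let `(Y, ι, T)` be a unitary `ρ`-dilation of `A`, and put `a = √(ρ/ρ')`, `b = √(1 - ρ/ρ')`.
Dilate once more into `Y ⊕ ℓ²(ℤ, Y)`, embedding `x ↦ (a ι x, b δ₀ ι x)` and letting one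
coordinate operator act on the new summand by the bilateral shift `S`. Unimodular combinations
remain unitary, being block diagonal with unitary blocks. Since `Sⁿ δ₀ ⊥ δ₀` for `n ≥ 1`, the new
summand is invisible in the compressions of powers, which therefore equal `a² = ρ/ρ'` times the old
ones.
-/

section BlockDiag

variable {𝕜 E F : Type*} [RCLike 𝕜]
  [NormedAddCommGroup E] [InnerProductSpace 𝕜 E] [CompleteSpace E]
  [NormedAddCommGroup F] [InnerProductSpace 𝕜 F] [CompleteSpace F]

def blockDiag :
    (E →L[𝕜] E) × (F →L[𝕜] F) →⋆ₐ[𝕜] (WithLp 2 (E × F) →L[𝕜] WithLp 2 (E × F)) where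
  toFun T := (WithLp.prodContinuousLinearEquiv 2 𝕜 E F).symm.toContinuousLinearMap ∘L
    T.1.prodMap T.2 ∘L (WithLp.prodContinuousLinearEquiv 2 𝕜 E F).toContinuousLinearMap
  map_one' := rfl
  map_mul' _ _ := rfl
  map_zero' := rfl
  map_add' _ _ := rfl
  commutes' _ := rfl
  map_star' T := by
    rw [star_eq_adjoint, eq_adjoint_iff]
    intro x y
    simp [WithLp.prod_inner_apply, adjoint_inner_left, Prod.star_def, star_eq_adjoint]

@[simp] lemma blockDiag_apply_fst (T : (E →L[𝕜] E) × (F →L[𝕜] F)) (x : WithLp 2 (E × F)) :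
    (blockDiag T x).fst = T.1 x.fst := rfl

@[simp] lemma blockDiag_apply_snd (T : (E →L[𝕜] E) × (F →L[𝕜] F)) (x : WithLp 2 (E × F)) :
    (blockDiag T x).snd = T.2 x.snd := rfl

lemma sum_smul_blockDiag_single {ι : Type*} [Fintype ι] [DecidableEq ι] (z : ι → 𝕜)
    (T : ι → E →L[𝕜] E) (i : ι) (U : F →L[𝕜] F) :
    ∑ k, z k • blockDiag (T k, (Pi.single i U : ι → F →L[𝕜] F) k) =
      blockDiag (∑ k, z k • T k, z i • U) := by
  simp only [← map_smul, ← map_sum]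
  congr 1
  refine Prod.ext ?_ ?_ <;> simp [Prod.fst_sum, Prod.snd_sum, Pi.single_apply]

variable {X : Type*} [NormedAddCommGroup X] [InnerProductSpace 𝕜 X] [CompleteSpace X]

def columnOp (f : X →L[𝕜] E) (g : X →L[𝕜] F) : X →L[𝕜] WithLp 2 (E × F) :=
  (WithLp.prodContinuousLinearEquiv 2 𝕜 E F).symm.toContinuousLinearMap ∘L f.prod g

lemma adjoint_columnOp_smul_comp_blockDiag_comp (a b : 𝕜) (f : X →L[𝕜] E) (g : X →L[𝕜] F)
    (T : (E →L[𝕜] E) × (F →L[𝕜] F)) :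
    adjoint (columnOp (a • f) (b • g)) ∘L blockDiag T ∘L columnOp (a • f) (b • g) =
      (starRingEnd 𝕜 a * a) • (adjoint f ∘L T.1 ∘L f) +
        (starRingEnd 𝕜 b * b) • (adjoint g ∘L T.2 ∘L g) := by
  ext x
  refine ext_inner_right 𝕜 fun y => ?_
  simp [adjoint_inner_left, inner_add_left, inner_smul_left, inner_smul_right,
    WithLp.prod_inner_apply, columnOp, mul_assoc]

lemma isometry_columnOp_smul {a b : 𝕜} (hab : starRingEnd 𝕜 a * a + starRingEnd 𝕜 b * b = 1)
    {f : X →L[𝕜] E} {g : X →L[𝕜] F} (hf : Isometry f) (hg : Isometry g) :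
    Isometry (columnOp (a • f) (b • g)) := by
  rw [isometry_iff_adjoint_comp_self] at hf hg ⊢
  have h := adjoint_columnOp_smul_comp_blockDiag_comp a b f g 1
  simp only [map_one, Prod.fst_one, Prod.snd_one, one_def, id_comp, hf, hg] at h
  rw [h, ← add_smul, hab, one_smul, one_def]

end BlockDiag

section LpReindex

variable {𝕜 E α β : Type*} [NormedField 𝕜] [NormedAddCommGroup E] [NormedSpace 𝕜 E]

lemma memℓp_comp_equiv (e : α ≃ β) (f : lp (fun _ : β => E) 2) : Memℓp (fun a => f (e a)) 2 :=
  memℓp_gen <| e.summable_iff.2 <| (memℓp_gen_iff (by norm_num)).1 f.2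

def lpCompEquiv (e : α ≃ β) : lp (fun _ : β => E) 2 ≃ₗᵢ[𝕜] lp (fun _ : α => E) 2 where
  toFun f := ⟨fun a => f (e a), memℓp_comp_equiv e f⟩
  invFun f := ⟨fun b => f (e.symm b), memℓp_comp_equiv e.symm f⟩
  map_add' _ _ := rfl
  map_smul' _ _ := rfl
  left_inv f := by ext; simp
  right_inv f := by ext; simp
  norm_map' f := by
    simp only [lp.norm_eq_tsum_rpow (show 0 < (2 : ENNReal).toReal by norm_num)]
    congr 1
    exact e.tsum_eq fun b => ‖f b‖ ^ (2 : ENNReal).toReal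

@[simp] lemma lpCompEquiv_apply (e : α ≃ β) (f : lp (fun _ : β => E) 2) (a : α) :
    lpCompEquiv (𝕜 := 𝕜) e f a = f (e a) := rfl

lemma lpCompEquiv_single [DecidableEq α] [DecidableEq β] (e : α ≃ β) (b : β) (x : E) :
    lpCompEquiv (𝕜 := 𝕜) e (lp.single 2 b x) = lp.single 2 (e.symm b) x := by
  ext a
  simp [lp.single_apply, Pi.single_apply, e.eq_symm_apply]

def lpShift : lp (fun _ : ℤ => E) 2 ≃ₗᵢ[𝕜] lp (fun _ : ℤ => E) 2 :=
  lpCompEquiv (Equiv.subRight 1)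

lemma lpShift_pow_single (n : ℕ) (x : E) :
    ((lpShift (𝕜 := 𝕜) (E := E) : lp (fun _ : ℤ => E) 2 →L[𝕜] _) ^ n) (lp.single 2 0 x) =
      lp.single (E := fun _ : ℤ => E) 2 (n : ℤ) x := by
  induction n with
  | zero => simp
  | succ n ih =>
    rw [pow_succ', mul_apply_eq_comp, ih]
    exact (lpCompEquiv_single _ _ x).trans (by simp)

end LpReindex

section Shift

variable {𝕜 E : Type*} [RCLike 𝕜] [NormedAddCommGroup E] [InnerProductSpace 𝕜 E] [CompleteSpace E]

lemma lpShift_mem_unitary :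
    (lpShift (𝕜 := 𝕜) (E := E) : lp (fun _ : ℤ => E) 2 →L[𝕜] lp (fun _ : ℤ => E) 2) ∈
      unitary _ :=
  ((Unitary.linearIsometryEquiv (𝕜 := 𝕜) (H := lp (fun _ : ℤ => E) 2)).symm lpShift).2

lemma adjoint_single_comp_lpShift_pow_comp_single {n : ℕ} (hn : n ≠ 0) :
    adjoint (lp.singleContinuousLinearMap 𝕜 (fun _ : ℤ => E) 2 0) ∘L
      ((lpShift (𝕜 := 𝕜) (E := E) : lp (fun _ : ℤ => E) 2 →L[𝕜] _) ^ n) ∘L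
      lp.singleContinuousLinearMap 𝕜 (fun _ : ℤ => E) 2 0 = 0 := by
  ext x
  refine ext_inner_right 𝕜 fun y => ?_
  rw [comp_apply, comp_apply, adjoint_inner_left, lp.singleContinuousLinearMap_apply,
    lpShift_pow_single]
  simp [lp.inner_single_left, hn]

end Shift

lemma Prod.mk_mem_unitary {R S : Type*} [Monoid R] [StarMul R] [Monoid S] [StarMul S] {r : R}
    {s : S} (hr : r ∈ unitary R) (hs : s ∈ unitary S) : (r, s) ∈ unitary (R × S) := by
  rw [Unitary.mem_iff] at hr hs ⊢
  simp [Prod.ext_iff, hr, hs]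

lemma RCLike.mem_unitary_of_norm_eq_one {𝕜 : Type*} [RCLike 𝕜] {z : 𝕜} (hz : ‖z‖ = 1) :
    z ∈ unitary 𝕜 := by
  rw [Unitary.mem_iff_star_mul_self, RCLike.star_def, RCLike.conj_mul, hz]
  simp

lemma isUnitaryOp_iff_mem_unitary {Y : Type*} [NormedAddCommGroup Y] [InnerProductSpace ℂ Y]
    [CompleteSpace Y] (T : Y →L[ℂ] Y) : IsUnitaryOp T ↔ T ∈ unitary (Y →L[ℂ] Y) := by
  rw [Unitary.mem_iff, IsUnitaryOp, star_eq_adjoint, and_comm]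
  rfl

lemma Complex.conj_sqrt_mul_sqrt {r : ℝ} (hr : 0 ≤ r) : starRingEnd ℂ (√r : ℂ) * √r = r := by
  rw [Complex.conj_ofReal, ← Complex.ofReal_mul, Real.mul_self_sqrt hr]

attribute [instance] UnitaryRhoDilation.instN UnitaryRhoDilation.instI UnitaryRhoDilation.instC

namespace UnitaryRhoDilation

variable {N : ℕ} {ρ : ℝ} {X : Type*} [NormedAddCommGroup X] [InnerProductSpace ℂ X]
  [CompleteSpace X] {A : Fin N → X →L[ℂ] X}

def monoOfWandering (D : UnitaryRhoDilation N ρ X A) (i : Fin N) {K : Type}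
    [NormedAddCommGroup K] [InnerProductSpace ℂ K] [CompleteSpace K] {U : K →L[ℂ] K}
    (hU : U ∈ unitary (K →L[ℂ] K)) {J : D.Y →L[ℂ] K} (hJ : Isometry J)
    (hUJ : ∀ n ≠ 0, adjoint J ∘L (U ^ n) ∘L J = 0) {ρ' : ℝ} (hρ : 0 < ρ) (hρρ' : ρ ≤ ρ') :
    UnitaryRhoDilation N ρ' X A where
  Y := WithLp 2 (D.Y × K)
  ι := columnOp ((√(ρ / ρ') : ℂ) • D.ι) ((√(1 - ρ / ρ') : ℂ) • (J ∘L D.ι))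
  isom := by
    have hr : ρ / ρ' ≤ 1 := div_le_one_of_le₀ hρρ' (hρ.le.trans hρρ')
    refine isometry_columnOp_smul ?_ D.isom (hJ.comp D.isom)
    rw [Complex.conj_sqrt_mul_sqrt (div_nonneg hρ.le (hρ.le.trans hρρ')),
      Complex.conj_sqrt_mul_sqrt (by linarith)]
    push_cast
    ring
  At k := blockDiag (D.At k, (Pi.single i U : Fin N → K →L[ℂ] K) k)
  unit ζ hζ := by
    rw [isUnitaryOp_iff_mem_unitary, sum_smul_blockDiag_single]
    exact Unitary.map_mem blockDiag <| Prod.mk_mem_unitary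
      ((isUnitaryOp_iff_mem_unitary _).1 (D.unit ζ hζ))
      (Unitary.smul_mem_of_mem (RCLike.mem_unitary_of_norm_eq_one (hζ i)) hU)
  dil z n hn := by
    have hwandering : adjoint (J ∘L D.ι) ∘L ((z i • U) ^ n) ∘L J ∘L D.ι = 0 := by
      rw [smul_pow, adjoint_comp, smul_comp, comp_smul, comp_assoc, ← comp_assoc _ J,
        ← comp_assoc (adjoint J), hUJ n (by omega), zero_comp, comp_zero, smul_zero]
    rw [D.dil z n hn, sum_smul_blockDiag_single, ← map_pow, Prod.pow_mk,
      adjoint_columnOp_smul_comp_blockDiag_comp, hwandering, smul_zero, add_zero, smul_smul,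
      Complex.conj_sqrt_mul_sqrt (div_nonneg hρ.le (hρ.le.trans hρρ')), ← Complex.ofReal_mul,
      mul_div_cancel₀ _ (hρ.trans_le hρρ').ne']

end UnitaryRhoDilation

/-- for `0 < ρ < ρ'`, the class `C_{ρ,N}` is contained in `C_{ρ',N}`:
every `N`-tuple admitting a unitary `ρ`-dilation admits a unitary `ρ'`-dilation. -/
theorem memC_mono (N : ℕ) (hN : 1 ≤ N) (ρ ρ' : ℝ) (hρ : 0 < ρ) (hρρ' : ρ < ρ')
    {X : Type*} [NormedAddCommGroup X] [InnerProductSpace ℂ X] [CompleteSpace X]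
    (A : Fin N → X →L[ℂ] X) (hA : MemC N ρ A) : MemC N ρ' A := by
  obtain ⟨D⟩ := hA
  exact ⟨D.monoOfWandering ⟨0, hN⟩ lpShift_mem_unitary
    (J := lp.singleContinuousLinearMap ℂ (fun _ : ℤ => D.Y) 2 0)
    (lp.isometry_single (E := fun _ : ℤ => D.Y) (p := 2) 0)
    (fun _ hn => adjoint_single_comp_lpShift_pow_comp_single hn) hρ hρρ'.le⟩
end
end

section
/- Let N ≥ 1, let ρ > 0 with ρ ≠ 1, let X be a nonzero complex Hilbert space, and let A = (A₁,…,A_N) be an N-tuple of bounded linear operators on X such that for every ζ ∈ ℂ^N with |ζ₁| = … = |ζ_N| = 1 the operator (1/ρ)·(ζ₁A₁ + … + ζ_N A_N) is unitary. Then A does not admit a unitary ρ-dilation, i.e. A ∉ C_{ρ,N}. -/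
open ContinuousLinearMap

noncomputable section

/-! Take `ζ = (1, …, 1)`, `U = ρ⁻¹ (A₁ + ⋯ + A_N)` and `T = Ã₁ + ⋯ + Ã_N`. For `n = 1` the
dilation says that the compression `ι* T ι` of the unitary `T` is the unitary `U`; by Pythagoras
this forces `T ι = ι U`, hence `ι* T² ι = U²`. For `n = 2` it then reads `ρ² U² = ρ U²`, and
`U² ≠ 0` since `U` is an isometry on a nonzero space, so `ρ = 1`. -/

namespace ContinuousLinearMap

theorem pow_comp_eq_comp_pow {R M M₂ : Type*} [Semiring R] [TopologicalSpace M] [AddCommMonoid M]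
    [Module R M] [TopologicalSpace M₂] [AddCommMonoid M₂] [Module R M₂]
    {V : M →L[R] M₂} {T : M₂ →L[R] M₂} {U : M →L[R] M}
    (h : T ∘L V = V ∘L U) (n : ℕ) : (T ^ n) ∘L V = V ∘L (U ^ n) := by
  induction n with
  | zero => rfl
  | succ n ih => rw [pow_succ, pow_succ, mul_def, mul_def, comp_assoc, h, ← comp_assoc, ih,
      comp_assoc]

variable {𝕜 H K : Type*} [RCLike 𝕜] [NormedAddCommGroup H] [InnerProductSpace 𝕜 H]
  [CompleteSpace H] [NormedAddCommGroup K] [InnerProductSpace 𝕜 K] [CompleteSpace K]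

theorem comp_eq_comp_of_adjoint_comp_comp_eq {V : H →L[𝕜] K} {T : K →L[𝕜] K} {U : H →L[𝕜] H}
    (hV : adjoint V ∘L V = 1) (hT : ∀ y, ‖T y‖ ≤ ‖y‖) (hU : adjoint U ∘L U = 1)
    (hcomp : adjoint V ∘L T ∘L V = U) : T ∘L V = V ∘L U := by
  ext x
  have hVn := V.norm_map_iff_adjoint_comp_self.mpr hV
  have hUn := U.norm_map_iff_adjoint_comp_self.mpr hU
  have hinner : inner 𝕜 (T (V x)) (V (U x)) = (‖x‖ ^ 2 : ℝ) := by
    rw [← adjoint_inner_left]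
    change inner 𝕜 ((adjoint V ∘L T ∘L V) x) (U x) = _
    rw [hcomp, inner_self_eq_norm_sq_to_K, hUn, RCLike.ofReal_pow]
  have hsq : ‖T (V x) - V (U x)‖ ^ 2 ≤ 0 := by
    rw [norm_sub_sq (𝕜 := 𝕜), hinner, RCLike.ofReal_re, hVn, hUn]
    have hTVx : ‖T (V x)‖ ≤ ‖x‖ := hVn x ▸ hT (V x)
    nlinarith [norm_nonneg (T (V x))]
  simpa [sub_eq_zero] using (pow_eq_zero_iff two_ne_zero).mp (le_antisymm hsq (by positivity))

theorem adjoint_comp_pow_comp_of_comp_eq {V : H →L[𝕜] K} {T : K →L[𝕜] K} {U : H →L[𝕜] H}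
    (hV : adjoint V ∘L V = 1) (h : T ∘L V = V ∘L U) (n : ℕ) :
    adjoint V ∘L (T ^ n) ∘L V = U ^ n := by
  rw [pow_comp_eq_comp_pow h, ← comp_assoc, hV, ← mul_def, one_mul]

end ContinuousLinearMap

theorem not_memC_of_unitary_pencil_general (N : ℕ) (ρ : ℝ) (hρ : 0 < ρ) (hρ1 : ρ ≠ 1)
    {X : Type*} [NormedAddCommGroup X] [InnerProductSpace ℂ X] [CompleteSpace X] [Nontrivial X]
    (A : Fin N → X →L[ℂ] X)
    (hA : ∀ ζ : Fin N → ℂ, (∀ k, ‖ζ k‖ = 1) →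
      IsUnitaryOp ((ρ : ℂ)⁻¹ • ∑ k, ζ k • A k)) :
    ¬ MemC N ρ A := by
  rintro ⟨⟨Y, ι, hιisom, At, hunit, hdil⟩⟩
  have hρ0 : (ρ : ℂ) ≠ 0 := by exact_mod_cast hρ.ne'
  set U : X →L[ℂ] X := (ρ : ℂ)⁻¹ • ∑ k, (1 : Fin N → ℂ) k • A k
  set T : Y →L[ℂ] Y := ∑ k, (1 : Fin N → ℂ) k • At k
  have hU : IsUnitaryOp U := hA 1 fun _ => norm_one
  have hT : IsUnitaryOp T := hunit 1 fun _ => norm_one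
  have hS : ∑ k, (1 : Fin N → ℂ) k • A k = (ρ : ℂ) • U := by rw [smul_inv_smul₀ hρ0]
  have hι : adjoint ι ∘L ι = 1 := ι.isometry_iff_adjoint_comp_self.mp hιisom
  have hcomp : adjoint ι ∘L T ∘L ι = U := by
    have := hdil 1 1 le_rfl
    rw [pow_one, pow_one, hS] at this
    exact (smul_right_injective _ hρ0 this).symm
  have hintertwine : T ∘L ι = ι ∘L U := comp_eq_comp_of_adjoint_comp_comp_eq hι
    (fun y => ((norm_map_iff_adjoint_comp_self T).mpr hT.2 y).le) hU.2 hcomp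
  have hsq : (ρ : ℂ) ^ 2 • U ^ 2 = (ρ : ℂ) • U ^ 2 := by
    have := hdil 1 2 one_le_two
    rwa [hS, smul_pow, adjoint_comp_pow_comp_of_comp_eq hι hintertwine] at this
  have hU2 : U ^ 2 ≠ 0 := ((isLeftRegular_of_mul_eq_one hU.2).pow 2).ne_zero
  have hρsq : (ρ : ℂ) * ρ = ρ * 1 := by simpa [sq] using smul_left_injective ℂ hU2 hsq
  exact hρ1 (by exact_mod_cast mul_left_cancel₀ hρ0 hρsq)

/-- if `ρ > 0`, `ρ ≠ 1`, `X ≠ 0`, and `(1/ρ)(ζ₁A₁ + ⋯ + ζ_N A_N)` is unitary for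
every unimodular `ζ ∈ ℂ^N`, then `A` admits no unitary `ρ`-dilation, i.e. `A ∉ C_{ρ,N}`. -/
theorem not_memC_of_unitary_pencil (N : ℕ) (hN : 1 ≤ N) (ρ : ℝ) (hρ : 0 < ρ) (hρ1 : ρ ≠ 1)
    {X : Type*} [NormedAddCommGroup X] [InnerProductSpace ℂ X] [CompleteSpace X] [Nontrivial X]
    (A : Fin N → X →L[ℂ] X)
    (hA : ∀ ζ : Fin N → ℂ, (∀ k, ‖ζ k‖ = 1) →
      IsUnitaryOp ((ρ : ℂ)⁻¹ • ∑ k, ζ k • A k)) :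
    ¬ MemC N ρ A :=
  not_memC_of_unitary_pencil_general N ρ hρ hρ1 A hA
end
end
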